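/- Let p be a prime, p^r a prime power, n ≥ p^r, and k a field. Let λ and μ be p^r-stable partitions of n and let H ≤ S_{p^r} be a subgroup whose action on B is transitive. Then the k-dimension of the space of S_n-equivariant k-linear maps from the permutation representation k[Tab^λ] to the permutation representation k[Tab^μ] equals the k-dimension of the space of S_{n−p^r}-equivariant k-linear maps from k[(Tab^λ)^H] to k[(Tab^μ)^H], where (Tab^λ)^H and (Tab^μ)^H carry their natural S_{n−p^r}-actions. -/

import Mathlib

/-- `f : Fin n → Fin ℓ` is a tableau of shape `lam`: the fiber over `i` has
cardinality `lam i`. -/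
def TabP {n ℓ : ℕ} (lam : Fin ℓ → ℕ) (f : Fin n → Fin ℓ) : Prop :=
  ∀ i : Fin ℓ, (Finset.univ.filter fun a => f a = i).card = lam i

lemma card_fiber_comp {n ℓ : ℕ} (f : Fin n → Fin ℓ) (σ : Equiv.Perm (Fin n))
    (i : Fin ℓ) :
    (Finset.univ.filter fun a => f (σ a) = i).card =
      (Finset.univ.filter fun a => f a = i).card := by
  have h : (Finset.univ.filter fun a => f a = i) =
      (Finset.univ.filter fun a => f (σ a) = i).map σ.toEmbedding := by
    ext b
    simp only [Finset.mem_filter, Finset.mem_univ, true_and, Finset.mem_map,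
      Equiv.coe_toEmbedding]
    constructor
    · intro hb
      exact ⟨σ.symm b, by simpa using hb, by simp⟩
    · rintro ⟨a, ha, rfl⟩
      exact ha
  rw [h, Finset.card_map]

/-- The action of a permutation `σ ∈ S_n` on tableaux of shape `lam`
(this is the action of `σ⁻¹`, i.e. `f ↦ f ∘ σ`). -/
def tabPerm {n ℓ : ℕ} (lam : Fin ℓ → ℕ) (σ : Equiv.Perm (Fin n))
    (f : {f : Fin n → Fin ℓ // TabP lam f}) : {f : Fin n → Fin ℓ // TabP lam f} :=
  ⟨fun a => f.1 (σ a), fun i => by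
    have := card_fiber_comp f.1 σ i
    simpa [this] using f.2 i⟩

section
variable {n : ℕ} (N : ℕ)

lemma perm_lt_of_fixes {n : ℕ} (N : ℕ) (σ : Equiv.Perm (Fin n))
    (hσ : ∀ a : Fin n, N ≤ (a : ℕ) → σ a = a) (a : Fin n) (ha : (a : ℕ) < N) :
    (σ a : ℕ) < N := by
  by_contra hc
  push_neg at hc
  have h1 : σ (σ a) = σ a := hσ (σ a) hc
  have h2 : σ a = a := σ.injective h1
  rw [h2] at hc
  omega

lemma perm_comm_of_disjoint {n : ℕ} (N : ℕ) (σ h : Equiv.Perm (Fin n))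
    (hσ : ∀ a : Fin n, N ≤ (a : ℕ) → σ a = a)
    (hh : ∀ a : Fin n, (a : ℕ) < N → h a = a) (a : Fin n) :
    σ (h a) = h (σ a) := by
  by_cases ha : (a : ℕ) < N
  · rw [hh a ha, hh (σ a) (perm_lt_of_fixes N σ hσ a ha)]
  · push_neg at ha
    rw [hσ a ha]
    have hb : N ≤ (h a : ℕ) := by
      by_contra hc
      push_neg at hc
      have h1 : h (h a) = h a := hh (h a) hc
      have h2 : h a = a := h.injective h1
      rw [h2] at hc
      omega
    rw [hσ (h a) hb]

end

/-- The action of a permutation `σ` fixing the last points (those with index `≥ N`)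
pointwise on the `H`-fixed tableaux of shape `lam`, where `H` is a subgroup whose
elements fix the first `N` points pointwise. -/
def fixPerm {n ℓ : ℕ} (N : ℕ) (lam : Fin ℓ → ℕ) (H : Subgroup (Equiv.Perm (Fin n)))
    (hH : ∀ h ∈ H, ∀ a : Fin n, (a : ℕ) < N → h a = a)
    (σ : Equiv.Perm (Fin n)) (hσ : ∀ a : Fin n, N ≤ (a : ℕ) → σ a = a)
    (f : {f : Fin n → Fin ℓ // TabP lam f ∧ ∀ h ∈ H, f ∘ ⇑h⁻¹ = f}) :
    {f : Fin n → Fin ℓ // TabP lam f ∧ ∀ h ∈ H, f ∘ ⇑h⁻¹ = f} :=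
  ⟨fun a => f.1 (σ a),
    ⟨fun i => by
      have := card_fiber_comp f.1 σ i
      simpa [this] using f.2.1 i,
    fun h hh => by
      funext a
      have hcomm : σ (h⁻¹ a) = h⁻¹ (σ a) :=
        perm_comm_of_disjoint N σ h⁻¹ hσ (hH h⁻¹ (inv_mem hh)) a
      have hfix := congrFun (f.2.2 h hh) (σ a)
      simp only [Function.comp_apply] at hfix ⊢
      rw [hcomm, hfix]⟩⟩

/-- The submodule of `k`-linear maps `W₁ → W₂` commuting with two families of
operators indexed by the same type (the space of equivariant maps). -/
def commutant (k : Type*) [Field k] {W₁ W₂ : Type*} [AddCommGroup W₁] [Module k W₁]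
    [AddCommGroup W₂] [Module k W₂] {ι : Sort*}
    (A₁ : ι → (W₁ →ₗ[k] W₁)) (A₂ : ι → (W₂ →ₗ[k] W₂)) :
    Submodule k (W₁ →ₗ[k] W₂) where
  carrier := {T | ∀ i : ι, T ∘ₗ A₁ i = A₂ i ∘ₗ T}
  add_mem' := by
    intro a b ha hb i
    rw [LinearMap.add_comp, LinearMap.comp_add, ha i, hb i]
  zero_mem' := by
    intro i
    rw [LinearMap.zero_comp, LinearMap.comp_zero]
  smul_mem' := by
    intro c a ha i
    rw [LinearMap.smul_comp, LinearMap.comp_smul, ha i]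

/-!
An equivariant map `k[X] → k[Y]` between permutation modules is a matrix `Y × X → k` that is
constant on orbits, so these maps form a space whose dimension is the number of orbits on `Y × X`.
The `S_n`-orbits of pairs of tableaux `(x, y)` are classified by the joint fibre counts
`#{a | x a = i ∧ y a = j}`. An `H`-fixed tableau is constant on the block `B`, and
`n - λ₁ < p^r` forces this constant to be the first row; so pairs of `H`-fixed tableaux agree
on `B`, and their `S_{n-p^r}`-orbits are classified by the same joint fibre counts. Finally
`2λ₁, 2μ₁ ≥ n + p^r` makes the first rows of `x` and `y` share at least `p^r` points, so every
`S_n`-orbit contains a pair that is constant on `B`, hence `H`-fixed: both orbit sets are indexed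
by the same set of joint fibre counts.
-/

open Finset

section Commutant

variable {k : Type*} [Field k] {X Y Z : Type*} {ι : Sort*} {u : ι → X → X} {v : ι → Y → Y}

theorem mem_commutant_funLeft_iff [Fintype X] [DecidableEq X]
    (hu : ∀ i, Function.Bijective (u i)) (T : (X → k) →ₗ[k] (Y → k)) :
    T ∈ commutant k (fun i => LinearMap.funLeft k k (u i))
        (fun i => LinearMap.funLeft k k (v i)) ↔
      ∀ i y x, LinearMap.toMatrix' T (v i y) (u i x) = LinearMap.toMatrix' T y x := by
  have hsingle : ∀ i x, (Pi.single (u i x) (1 : k) : X → k) ∘ u i = Pi.single x 1 :=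
    fun i x => by
      rw [Pi.single, Function.update_comp_eq_of_injective _ (hu i).1]
      rfl
  refine ⟨fun hT i y x => ?_, fun hT i => LinearMap.toMatrix'.injective ?_⟩
  · have := congrFun (LinearMap.congr_fun (hT i) (Pi.single (u i x) 1)) y
    change T (Pi.single (u i x) 1 ∘ u i) y = T (Pi.single (u i x) 1) (v i y) at this
    rw [LinearMap.toMatrix'_apply, LinearMap.toMatrix'_apply, ← this, hsingle]
  · ext y x
    obtain ⟨x, rfl⟩ := (hu i).2 x
    simpa [LinearMap.toMatrix'_apply, LinearMap.funLeft, hsingle] using (hT i y x).symm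

variable (k) in
def factorMatrix (c : Y → X → Z) :
    (Set.range (fun q : Y × X => c q.1 q.2) → k) →ₗ[k] Matrix Y X k :=
  LinearMap.pi fun y => LinearMap.funLeft k k fun x => ⟨c y x, (y, x), rfl⟩

theorem factorMatrix_injective (c : Y → X → Z) : Function.Injective (factorMatrix k c) := by
  intro N N' h
  funext ⟨_, ⟨y, x⟩, rfl⟩
  exact congrFun (congrFun h y) x

theorem mem_range_factorMatrix_iff {c : Y → X → Z} (hc_inv : ∀ i y x, c (v i y) (u i x) = c y x)
    (hc_complete : ∀ y x y' x', c y x = c y' x' → ∃ i, y' = v i y ∧ x' = u i x)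
    (M : Matrix Y X k) :
    M ∈ LinearMap.range (factorMatrix k c) ↔ ∀ i y x, M (v i y) (u i x) = M y x := by
  constructor
  · rintro ⟨N, rfl⟩ i y x
    exact congrArg N (Subtype.ext (hc_inv i y x))
  · intro hM
    have hfactor : ∀ y x y' x', c y x = c y' x' → M y x = M y' x' := by
      intro y x y' x' h
      obtain ⟨i, rfl, rfl⟩ := hc_complete y x y' x' h
      exact (hM i y x).symm
    refine ⟨fun z => M z.2.choose.1 z.2.choose.2, funext fun y => funext fun x => ?_⟩
    exact hfactor _ _ _ _ (Exists.choose_spec (p := fun q : Y × X => c q.1 q.2 = c y x) _)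

theorem finrank_commutant_eq_card_range [Fintype X] [Fintype Y]
    (hu : ∀ i, Function.Bijective (u i)) {c : Y → X → Z}
    (hc_inv : ∀ i y x, c (v i y) (u i x) = c y x)
    (hc_complete : ∀ y x y' x', c y x = c y' x' → ∃ i, y' = v i y ∧ x' = u i x) :
    Module.finrank k (commutant k (fun i => LinearMap.funLeft k k (u i))
        (fun i => LinearMap.funLeft k k (v i))) =
      Nat.card (Set.range fun q : Y × X => c q.1 q.2) := by
  classical
  have hrange : commutant k (fun i => LinearMap.funLeft k k (u i))
      (fun i => LinearMap.funLeft k k (v i)) =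
      LinearMap.range (LinearMap.toMatrix'.symm.toLinearMap ∘ₗ factorMatrix k c) := by
    ext T
    rw [mem_commutant_funLeft_iff hu, LinearMap.range_comp, Submodule.mem_map_equiv,
      LinearEquiv.symm_symm, mem_range_factorMatrix_iff hc_inv hc_complete]
  have hinj : Function.Injective (LinearMap.toMatrix'.symm.toLinearMap ∘ₗ factorMatrix k c) :=
    LinearMap.toMatrix'.symm.injective.comp (factorMatrix_injective c)
  rw [hrange, LinearMap.finrank_range_of_inj hinj, Module.finrank_fintype_fun_eq_card,
    Nat.card_eq_fintype_card]

end Commutant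

section FiberCard

variable {α β : Type*} [Fintype α] [DecidableEq β]

def fiberCard (h : α → β) (b : β) : ℕ := #{a | h a = b}

theorem fiberCard_comp_perm (h : α → β) (σ : Equiv.Perm α) : fiberCard (h ∘ σ) = fiberCard h :=
  funext fun _ => card_equiv σ (by simp)

theorem exists_perm_comp_eq_of_fiberCard_eq {h h' : α → β} (hc : fiberCard h = fiberCard h') :
    ∃ σ : Equiv.Perm α, h ∘ σ = h' := by
  have e : ∀ b, {a // h' a = b} ≃ {a // h a = b} := fun b =>
    Fintype.equivOfCardEq (by simp only [Fintype.card_subtype]; exact (congrFun hc b).symm)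
  exact ⟨(Equiv.sigmaFiberEquiv h').symm.trans
    ((Equiv.sigmaCongrRight e).trans (Equiv.sigmaFiberEquiv h)),
    funext fun a => (e (h' a) ⟨a, rfl⟩).2⟩

theorem fiberCard_subtype_add_fiberCard_subtype_not (q : α → Prop) [DecidablePred q]
    (h : α → β) (b : β) :
    fiberCard (fun a : {a // q a} => h a) b + fiberCard (fun a : {a // ¬ q a} => h a) b =
      fiberCard h b := by
  simp only [fiberCard, ← Fintype.card_subtype,
    Fintype.card_congr (Equiv.subtypeSubtypeEquivSubtypeInter _ (fun a => h a = b))]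
  simp only [Fintype.card_subtype, ← card_filter_add_card_filter_not (s := {a | h a = b}) q,
    filter_filter, and_comm]

theorem exists_perm_fixing_comp_eq {h h' : α → β} (q : α → Prop) [DecidablePred q]
    (hc : fiberCard h = fiberCard h') (hq : ∀ a, q a → h a = h' a) :
    ∃ σ : Equiv.Perm α, (∀ a, q a → σ a = a) ∧ h ∘ σ = h' := by
  have hrestrict : fiberCard (fun a : {a // ¬ q a} => h a) =
      fiberCard (fun a : {a // ¬ q a} => h' a) := by
    funext b
    have h₁ := fiberCard_subtype_add_fiberCard_subtype_not q h b
    have h₂ := fiberCard_subtype_add_fiberCard_subtype_not q h' b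
    have hfix : (fun a : {a // q a} => h a) = fun a : {a // q a} => h' a :=
      funext fun a => hq a a.2
    rw [hfix, congrFun hc b] at h₁
    omega
  obtain ⟨τ, hτ⟩ := exists_perm_comp_eq_of_fiberCard_eq hrestrict
  refine ⟨Equiv.Perm.ofSubtype τ,
    fun a ha => Equiv.Perm.ofSubtype_apply_of_not_mem τ (not_not.2 ha), funext fun a => ?_⟩
  by_cases ha : q a
  · simp [Equiv.Perm.ofSubtype_apply_of_not_mem τ (not_not.2 ha), hq a ha]
  · simpa [Equiv.Perm.ofSubtype_apply_of_mem τ ha] using congrFun hτ ⟨a, ha⟩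

end FiberCard

theorem Fin.card_filter_le_val (n N : ℕ) : #{i : Fin n | N ≤ (i : ℕ)} = n - N := by
  have h := card_filter_add_card_filter_not (s := univ) fun i : Fin n => (i : ℕ) < N
  simp only [not_lt, card_univ, Fintype.card_fin, Fin.card_filter_val_lt] at h
  omega

theorem comp_inv_eq_of_const_off_fixed {α β : Type*} {q : α → Prop} {H : Subgroup (Equiv.Perm α)}
    (hH : ∀ h ∈ H, ∀ a, q a → h a = a) {f : α → β} {b : β} (hf : ∀ a, ¬ q a → f a = b) :
    ∀ h ∈ H, f ∘ ⇑h⁻¹ = f := by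
  intro h hh
  funext a
  by_cases ha : q a
  · rw [Function.comp_apply, hH h⁻¹ (inv_mem hh) a ha]
  · have hinv : ¬ q (h⁻¹ a) := fun hq => by
      have hfixed := hH h hh _ hq
      rw [Equiv.Perm.coe_inv, h.apply_symm_apply] at hfixed
      exact ha (hfixed ▸ hq)
    rw [Function.comp_apply, hf _ hinv, hf a ha]

section Tableaux

variable {n ℓ : ℕ} {lam : Fin ℓ → ℕ} {f : Fin n → Fin ℓ}

theorem TabP.apply_eq_of_const_on (hf : TabP lam f) (hsum : ∑ i, lam i = n)
    {B : Finset (Fin n)} {i₀ : Fin ℓ} (hB : n - lam i₀ < #B)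
    (hconst : ∀ a ∈ B, ∀ b ∈ B, f a = f b) {a : Fin n} (ha : a ∈ B) : f a = i₀ := by
  by_contra hne
  have hB_le : #B ≤ lam (f a) := by
    rw [← hf (f a)]
    exact card_le_card fun b hb => mem_filter.2 ⟨mem_univ _, hconst b hb a ha⟩
  have hpair : lam i₀ + lam (f a) ≤ n := by
    rw [← hsum, ← sum_pair (Ne.symm hne)]
    exact sum_le_sum_of_subset (subset_univ _)
  omega

theorem TabP.apply_eq_of_fixed (hf : TabP lam f) (hsum : ∑ i, lam i = n)
    {H : Subgroup (Equiv.Perm (Fin n))} (hfix : ∀ h ∈ H, f ∘ ⇑h⁻¹ = f) {B : Finset (Fin n)}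
    (htrans : ∀ a ∈ B, ∀ b ∈ B, ∃ σ ∈ H, σ a = b) {i₀ : Fin ℓ} (hB : n - lam i₀ < #B)
    {a : Fin n} (ha : a ∈ B) : f a = i₀ := by
  refine hf.apply_eq_of_const_on hsum hB (fun a ha b hb => ?_) ha
  obtain ⟨σ, hσ, rfl⟩ := htrans a ha b hb
  simpa using congrFun (hfix σ hσ) (σ a)

theorem tabPerm_bijective (lam : Fin ℓ → ℕ) (σ : Equiv.Perm (Fin n)) :
    Function.Bijective (tabPerm lam σ) :=
  Function.bijective_iff_has_inverse.2 ⟨tabPerm lam σ⁻¹,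
    fun _ => Subtype.ext (funext fun _ => by simp [tabPerm]),
    fun _ => Subtype.ext (funext fun _ => by simp [tabPerm])⟩

theorem fixPerm_bijective (N : ℕ) (lam : Fin ℓ → ℕ) (H : Subgroup (Equiv.Perm (Fin n)))
    (hH : ∀ h ∈ H, ∀ a : Fin n, (a : ℕ) < N → h a = a)
    (σ : Equiv.Perm (Fin n)) (hσ : ∀ a : Fin n, N ≤ (a : ℕ) → σ a = a) :
    Function.Bijective (fixPerm N lam H hH σ hσ) :=
  Function.bijective_iff_has_inverse.2
    ⟨fixPerm N lam H hH σ⁻¹ fun a ha => by rw [Equiv.Perm.inv_eq_iff_eq, hσ a ha],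
      fun _ => Subtype.ext (funext fun _ => by simp [fixPerm]),
      fun _ => Subtype.ext (funext fun _ => by simp [fixPerm])⟩

end Tableaux

section Dimension

variable (k : Type*) [Field k] {n ℓ m : ℕ} {lam : Fin ℓ → ℕ} {mu : Fin m → ℕ}

theorem finrank_commutant_tabPerm :
    Module.finrank k (commutant k
        (fun σ : Equiv.Perm (Fin n) => LinearMap.funLeft k k (tabPerm lam σ))
        (fun σ : Equiv.Perm (Fin n) => LinearMap.funLeft k k (tabPerm mu σ))) =
      Nat.card (Set.range fun w : {f : Fin n → Fin m // TabP mu f} ×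
          {f : Fin n → Fin ℓ // TabP lam f} => fiberCard fun a => (w.2.1 a, w.1.1 a)) := by
  classical
  refine finrank_commutant_eq_card_range (v := tabPerm mu)
    (c := fun y x => fiberCard fun a => (x.1 a, y.1 a)) (tabPerm_bijective lam)
    (fun σ y x => fiberCard_comp_perm (fun a => (x.1 a, y.1 a)) σ) fun y x y' x' h => ?_
  obtain ⟨σ, hσ⟩ := exists_perm_comp_eq_of_fiberCard_eq h
  exact ⟨σ, Subtype.ext (funext fun a => (congrArg Prod.snd (congrFun hσ a)).symm),
    Subtype.ext (funext fun a => (congrArg Prod.fst (congrFun hσ a)).symm)⟩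

theorem finrank_commutant_fixPerm {N : ℕ} {H : Subgroup (Equiv.Perm (Fin n))}
    (hH : ∀ h ∈ H, ∀ a : Fin n, (a : ℕ) < N → h a = a) {i₀ : Fin ℓ} {j₀ : Fin m}
    (hx₀ : ∀ x : {f : Fin n → Fin ℓ // TabP lam f ∧ ∀ h ∈ H, f ∘ ⇑h⁻¹ = f},
      ∀ a : Fin n, N ≤ (a : ℕ) → x.1 a = i₀)
    (hy₀ : ∀ y : {f : Fin n → Fin m // TabP mu f ∧ ∀ h ∈ H, f ∘ ⇑h⁻¹ = f},
      ∀ a : Fin n, N ≤ (a : ℕ) → y.1 a = j₀) :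
    Module.finrank k (commutant k
        (fun σ : {σ : Equiv.Perm (Fin n) // ∀ a : Fin n, N ≤ (a : ℕ) → σ a = a} =>
          LinearMap.funLeft k k (fixPerm N lam H hH σ.1 σ.2))
        (fun σ : {σ : Equiv.Perm (Fin n) // ∀ a : Fin n, N ≤ (a : ℕ) → σ a = a} =>
          LinearMap.funLeft k k (fixPerm N mu H hH σ.1 σ.2))) =
      Nat.card (Set.range fun w : {f : Fin n → Fin m // TabP mu f ∧ ∀ h ∈ H, f ∘ ⇑h⁻¹ = f} ×
          {f : Fin n → Fin ℓ // TabP lam f ∧ ∀ h ∈ H, f ∘ ⇑h⁻¹ = f} =>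
        fiberCard fun a => (w.2.1 a, w.1.1 a)) := by
  classical
  refine finrank_commutant_eq_card_range
    (ι := {σ : Equiv.Perm (Fin n) // ∀ a : Fin n, N ≤ (a : ℕ) → σ a = a})
    (v := fun σ => fixPerm N mu H hH σ.1 σ.2) (c := fun y x => fiberCard fun a => (x.1 a, y.1 a))
    (fun σ => fixPerm_bijective N lam H hH σ.1 σ.2)
    (fun σ y x => fiberCard_comp_perm (fun a => (x.1 a, y.1 a)) σ.1) fun y x y' x' h => ?_
  obtain ⟨σ, hσN, hσ⟩ := exists_perm_fixing_comp_eq (fun a : Fin n => N ≤ (a : ℕ)) h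
    fun a ha => by simp only [hx₀ x a ha, hy₀ y a ha, hx₀ x' a ha, hy₀ y' a ha]
  exact ⟨⟨σ, hσN⟩, Subtype.ext (funext fun a => (congrArg Prod.snd (congrFun hσ a)).symm),
    Subtype.ext (funext fun a => (congrArg Prod.fst (congrFun hσ a)).symm)⟩

theorem range_fiberCard_fixed_eq {N : ℕ} {H : Subgroup (Equiv.Perm (Fin n))}
    (hH : ∀ h ∈ H, ∀ a : Fin n, (a : ℕ) < N → h a = a) {i₀ : Fin ℓ} {j₀ : Fin m}
    (hstab : 2 * n ≤ lam i₀ + mu j₀ + N) :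
    (Set.range fun w : {f : Fin n → Fin m // TabP mu f ∧ ∀ h ∈ H, f ∘ ⇑h⁻¹ = f} ×
        {f : Fin n → Fin ℓ // TabP lam f ∧ ∀ h ∈ H, f ∘ ⇑h⁻¹ = f} =>
      fiberCard fun a => (w.2.1 a, w.1.1 a)) =
    Set.range fun w : {f : Fin n → Fin m // TabP mu f} × {f : Fin n → Fin ℓ // TabP lam f} =>
      fiberCard fun a => (w.2.1 a, w.1.1 a) := by
  refine Set.Subset.antisymm ?_ ?_
  · rintro _ ⟨⟨y, x⟩, rfl⟩
    exact ⟨(⟨y.1, y.2.1⟩, ⟨x.1, x.2.1⟩), rfl⟩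
  rintro _ ⟨⟨y, x⟩, rfl⟩
  -- `e.extendSubtype` moves the block `{a | N ≤ a}` into the set where `x = i₀` and `y = j₀`,
  -- which `hstab` makes large enough.
  have hF : n - N ≤ #({a | x.1 a = i₀ ∧ y.1 a = j₀} : Finset (Fin n)) := by
    have h := card_inter_add_card_union (s := {a | x.1 a = i₀}) (t := {a | y.1 a = j₀})
    have hunion := card_le_univ
      (({a | x.1 a = i₀} : Finset (Fin n)) ∪ ({a | y.1 a = j₀} : Finset (Fin n)))
    rw [x.2 i₀, y.2 j₀, ← filter_and] at h
    rw [Fintype.card_fin] at hunion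
    omega
  obtain ⟨F₀, hF₀F, hF₀⟩ := exists_subset_card_eq hF
  let e : {a : Fin n // N ≤ (a : ℕ)} ≃ {a // a ∈ F₀} := Fintype.equivOfCardEq (by
    rw [Fintype.card_subtype, Fin.card_filter_le_val, Fintype.card_coe, hF₀])
  have hσF : ∀ a : Fin n, ¬ (a : ℕ) < N →
      x.1 (e.extendSubtype a) = i₀ ∧ y.1 (e.extendSubtype a) = j₀ := fun a ha => by
    rw [Equiv.extendSubtype_apply_of_mem e a (not_lt.1 ha)]
    exact (mem_filter.1 (hF₀F (e ⟨a, _⟩).2)).2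
  exact ⟨(⟨y.1 ∘ e.extendSubtype, fun j => (card_fiber_comp y.1 _ j).trans (y.2 j),
      comp_inv_eq_of_const_off_fixed hH fun a ha => (hσF a ha).2⟩,
    ⟨x.1 ∘ e.extendSubtype, fun i => (card_fiber_comp x.1 _ i).trans (x.2 i),
      comp_inv_eq_of_const_off_fixed hH fun a ha => (hσF a ha).1⟩),
    fiberCard_comp_perm (fun a => (x.1 a, y.1 a)) e.extendSubtype⟩

end Dimension

theorem stmt10_general (p r n ℓ m : ℕ) (hn : p ^ r ≤ n)
    (k : Type*) [Field k] (hl : 0 < ℓ) (hm : 0 < m)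
    (lam : Fin ℓ → ℕ)
    (hlsum : ∑ i, lam i = n)
    (hlstab : n - lam ⟨0, hl⟩ < p ^ r ∧ n + p ^ r ≤ 2 * lam ⟨0, hl⟩)
    (mu : Fin m → ℕ)
    (hmsum : ∑ j, mu j = n)
    (hmstab : n - mu ⟨0, hm⟩ < p ^ r ∧ n + p ^ r ≤ 2 * mu ⟨0, hm⟩)
    (H : Subgroup (Equiv.Perm (Fin n)))
    (hH : ∀ h ∈ H, ∀ a : Fin n, (a : ℕ) < n - p ^ r → h a = a)
    (htrans : ∀ a b : Fin n, n - p ^ r ≤ (a : ℕ) → n - p ^ r ≤ (b : ℕ) →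
      ∃ σ ∈ H, σ a = b) :
    Module.finrank k
      ↥(commutant k
        (fun σ : Equiv.Perm (Fin n) => LinearMap.funLeft k k (tabPerm lam σ))
        (fun σ : Equiv.Perm (Fin n) => LinearMap.funLeft k k (tabPerm mu σ))) =
    Module.finrank k
      ↥(commutant k
        (fun σ : {σ : Equiv.Perm (Fin n) // ∀ a : Fin n, n - p ^ r ≤ (a : ℕ) → σ a = a}
          => LinearMap.funLeft k k (fixPerm (n - p ^ r) lam H hH σ.1 σ.2))
        (fun σ : {σ : Equiv.Perm (Fin n) // ∀ a : Fin n, n - p ^ r ≤ (a : ℕ) → σ a = a}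
          => LinearMap.funLeft k k (fixPerm (n - p ^ r) mu H hH σ.1 σ.2))) := by
  let B : Finset (Fin n) := {a | n - p ^ r ≤ (a : ℕ)}
  have hB : #B = p ^ r := by
    rw [Fin.card_filter_le_val]
    omega
  have htransB : ∀ a ∈ B, ∀ b ∈ B, ∃ σ ∈ H, σ a = b := fun a ha b hb =>
    htrans a b (mem_filter.1 ha).2 (mem_filter.1 hb).2
  rw [finrank_commutant_tabPerm, finrank_commutant_fixPerm k hH (i₀ := ⟨0, hl⟩) (j₀ := ⟨0, hm⟩)
      (fun x a ha => x.2.1.apply_eq_of_fixed hlsum x.2.2 htransB (by omega)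
        (by simpa [B] using ha))
      (fun y a ha => y.2.1.apply_eq_of_fixed hmsum y.2.2 htransB (by omega)
        (by simpa [B] using ha)),
    range_fiberCard_fixed_eq hH (i₀ := ⟨0, hl⟩) (j₀ := ⟨0, hm⟩) (by omega)]

/-- for `p^r`-stable partitions `λ, μ` of `n` and a transitive subgroup
`H ≤ S_{p^r}`, the dimension of the space of `S_n`-equivariant linear maps
`k[Tab^λ] → k[Tab^μ]` equals the dimension of the space of `S_{n−p^r}`-equivariant
linear maps `k[(Tab^λ)^H] → k[(Tab^μ)^H]`. -/
theorem stmt10 (p r n ℓ m : ℕ) (hp : p.Prime) (hn : p ^ r ≤ n)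
    (k : Type*) [Field k] (hl : 0 < ℓ) (hm : 0 < m)
    (lam : Fin ℓ → ℕ) (hlanti : Antitone lam) (hlpos : ∀ i, 0 < lam i)
    (hlsum : ∑ i, lam i = n)
    (hlstab : n - lam ⟨0, hl⟩ < p ^ r ∧ n + p ^ r ≤ 2 * lam ⟨0, hl⟩)
    (mu : Fin m → ℕ) (hmanti : Antitone mu) (hmpos : ∀ j, 0 < mu j)
    (hmsum : ∑ j, mu j = n)
    (hmstab : n - mu ⟨0, hm⟩ < p ^ r ∧ n + p ^ r ≤ 2 * mu ⟨0, hm⟩)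
    (H : Subgroup (Equiv.Perm (Fin n)))
    (hH : ∀ h ∈ H, ∀ a : Fin n, (a : ℕ) < n - p ^ r → h a = a)
    (htrans : ∀ a b : Fin n, n - p ^ r ≤ (a : ℕ) → n - p ^ r ≤ (b : ℕ) →
      ∃ σ ∈ H, σ a = b) :
    Module.finrank k
      ↥(commutant k
        (fun σ : Equiv.Perm (Fin n) => LinearMap.funLeft k k (tabPerm lam σ))
        (fun σ : Equiv.Perm (Fin n) => LinearMap.funLeft k k (tabPerm mu σ))) =
    Module.finrank k
      ↥(commutant k
        (fun σ : {σ : Equiv.Perm (Fin n) // ∀ a : Fin n, n - p ^ r ≤ (a : ℕ) → σ a = a}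
          => LinearMap.funLeft k k (fixPerm (n - p ^ r) lam H hH σ.1 σ.2))
        (fun σ : {σ : Equiv.Perm (Fin n) // ∀ a : Fin n, n - p ^ r ≤ (a : ℕ) → σ a = a}
          => LinearMap.funLeft k k (fixPerm (n - p ^ r) mu H hH σ.1 σ.2))) :=
  stmt10_general p r n ℓ m hn k hl hm lam hlsum hlstab mu hmsum hmstab H hH htrans
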